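/- For any star graph K_{1,n−1} with n ≥ 3 vertices, γ_tc(M(K_{1,n−1})) = 2n − 2. -/

import Mathlib

open SimpleGraph

/-- The middle graph `M(G)`: vertices are `V(G) ⊕ E(G)`; an edge-vertex is adjacent to
another edge-vertex iff the edges are distinct and share an endpoint, and a vertex is
adjacent to an edge iff it is incident to it. -/
def middleGraph {V : Type*} (G : SimpleGraph V) : SimpleGraph (V ⊕ G.edgeSet) where
  Adj x y :=
    match x, y with
    | Sum.inl _, Sum.inl _ => False
    | Sum.inl v, Sum.inr e => v ∈ (e : Sym2 V)
    | Sum.inr e, Sum.inl v => v ∈ (e : Sym2 V)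
    | Sum.inr e, Sum.inr f => e ≠ f ∧ ∃ v, v ∈ (e : Sym2 V) ∧ v ∈ (f : Sym2 V)
  symm := by
    constructor
    rintro (v|e) (w|f) h
    · exact h
    · exact h
    · exact h
    · exact ⟨h.1.symm, h.2.imp fun v hv => ⟨hv.2, hv.1⟩⟩
  loopless := by
    constructor
    rintro (v|e) h
    · exact h
    · exact h.1 rfl

/-- `D` is a total dominating set of `G`: every vertex has a neighbour in `D`. -/
def IsTotalDomSet {V : Type*} (G : SimpleGraph V) (D : Set V) : Prop :=
  ∀ v : V, ∃ u ∈ D, G.Adj v u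

/-- `D` is a total outer-connected dominating set of `G`: it is total dominating and
the subgraph induced on the complement of `D` is connected. -/
def IsTOCDomSet {V : Type*} (G : SimpleGraph V) (D : Set V) : Prop :=
  IsTotalDomSet G D ∧ (G.induce Dᶜ).Connected

/-- The total domination number `γₜ(G)`. -/
noncomputable def totalDomNum {V : Type*} (G : SimpleGraph V) : ℕ :=
  sInf {k | ∃ D : Set V, IsTotalDomSet G D ∧ D.ncard = k}

/-- The total outer-connected domination number `γ_tc(G)`. -/
noncomputable def tocDomNum {V : Type*} (G : SimpleGraph V) : ℕ :=
  sInf {k | ∃ D : Set V, IsTOCDomSet G D ∧ D.ncard = k}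

/-- The set of leaves (vertices of degree 1) of `G`. -/
def leafSet {V : Type*} (G : SimpleGraph V) : Set V :=
  {v | ∃ u, G.neighborSet v = {u}}

/-- The wheel graph with hub `none` and rim cycle on `Fin n`. -/
def wheelGraph (n : ℕ) : SimpleGraph (Option (Fin n)) where
  Adj x y :=
    match x, y with
    | none, none => False
    | none, some _ => True
    | some _, none => True
    | some i, some j => (SimpleGraph.cycleGraph n).Adj i j
  symm := by
    constructor
    rintro (_|i) (_|j) h
    · exact h
    · exact h
    · exact h
    · exact (SimpleGraph.cycleGraph n).adj_symm h
  loopless := by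
    constructor
    rintro (_|i) h
    · exact h
    · exact (SimpleGraph.cycleGraph n).irrefl h

/-- The corona `G ∘ K₁`: to each vertex `a` of `G` (copy `Sum.inl a`) a pendant
vertex `Sum.inr a` is attached. -/
def corona {V : Type*} (G : SimpleGraph V) : SimpleGraph (V ⊕ V) where
  Adj x y :=
    match x, y with
    | Sum.inl a, Sum.inl b => G.Adj a b
    | Sum.inl a, Sum.inr b => a = b
    | Sum.inr a, Sum.inl b => a = b
    | Sum.inr _, Sum.inr _ => False
  symm := by
    constructor
    rintro (a|a) (b|b) h
    · exact G.adj_symm h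
    · exact h.symm
    · exact h.symm
    · exact h
  loopless := by
    constructor
    rintro (a|a) h
    · exact G.irrefl h
    · exact h

/-- The 2-corona `G ∘ P₂`: to each vertex `a` of `G` (copy `Sum.inl a`) a path
`Sum.inl a — Sum.inr (Sum.inl a) — Sum.inr (Sum.inr a)` of length 2 is attached. -/
def corona2 {V : Type*} (G : SimpleGraph V) : SimpleGraph (V ⊕ V ⊕ V) where
  Adj x y :=
    match x, y with
    | Sum.inl a, Sum.inl b => G.Adj a b
    | Sum.inl a, Sum.inr (Sum.inl b) => a = b
    | Sum.inr (Sum.inl a), Sum.inl b => a = b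
    | Sum.inr (Sum.inl a), Sum.inr (Sum.inr b) => a = b
    | Sum.inr (Sum.inr a), Sum.inr (Sum.inl b) => a = b
    | _, _ => False
  symm := by
    constructor
    rintro (a|a|a) (b|b|b) h <;> first | exact G.adj_symm h | exact h.symm | exact h
  loopless := by
    constructor
    rintro (a|a|a) h
    · exact G.irrefl h
    · exact h
    · exact h

/-- The spider `S_{1,n,n}`: hub `none`, middle vertices `some (.inl i)`,
leaves `some (.inr i)`; the star `K_{1,n}` with every edge subdivided once. -/
def spiderGraph (n : ℕ) : SimpleGraph (Option (Fin n ⊕ Fin n)) where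
  Adj x y :=
    match x, y with
    | none, some (Sum.inl _) => True
    | some (Sum.inl _), none => True
    | some (Sum.inl i), some (Sum.inr j) => i = j
    | some (Sum.inr i), some (Sum.inl j) => i = j
    | _, _ => False
  symm := by
    constructor
    rintro (_|i|i) (_|j|j) h <;> first | exact h.symm | exact h
  loopless := by
    constructor
    rintro (_|i|i) h <;> exact h

/-- The friendship graph `Fₙ`: `n` triangles sharing the common vertex `none`. -/
def friendshipGraph (n : ℕ) : SimpleGraph (Option (Fin n × Fin 2)) where
  Adj x y :=
    match x, y with
    | none, some _ => True
    | some _, none => True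
    | some (i, a), some (j, b) => i = j ∧ a ≠ b
    | none, none => False
  symm := by
    constructor
    rintro (_|⟨i,a⟩) (_|⟨j,b⟩) h <;> first | exact ⟨h.1.symm, h.2.symm⟩ | exact h
  loopless := by
    constructor
    rintro (_|⟨i,a⟩) h
    · exact h
    · exact h.2 rfl

/-
Every edge of a star contains a leaf, and the only neighbour of that leaf in the middle graph is
the edge itself; so a total dominating set `D` of `M(K_{1,m})` contains all `m` edge-vertices.
The vertices outside `D` are then original vertices, which are pairwise non-adjacent in a middle
graph, so the connectivity of the complement leaves room for at most one of them: `|D| ≥ 2m`.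
Conversely, all vertices but one leaf form such a set.
-/

namespace SimpleGraph

variable {V : Type*} {G : SimpleGraph V}

lemma IsIndepSet.subsingleton_of_connected_induce {s : Set V} (hs : G.IsIndepSet s)
    (hconn : (G.induce s).Connected) : s.Subsingleton := by
  have hbot : G.induce s = ⊥ := by
    ext ⟨x, hx⟩ ⟨y, hy⟩
    simp only [comap_adj, Function.Embedding.coe_subtype, bot_adj, iff_false]
    exact fun hxy => hs hx hy (G.ne_of_adj hxy) hxy
  rw [hbot, connected_bot_iff] at hconn
  exact (Set.subsingleton_coe s).1 hconn.1

lemma eq_mk_of_neighborSet_eq_singleton {v u : V} (hv : G.neighborSet v = {u}) {e : Sym2 V}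
    (he : e ∈ G.edgeSet) (hve : v ∈ e) : e = s(v, u) := by
  obtain ⟨w, rfl⟩ := Sym2.mem_iff_exists.1 hve
  have hw : w ∈ G.neighborSet v := he
  rw [hv, Set.mem_singleton_iff] at hw
  rw [hw]

lemma edge_eq_of_mem_leafSet {v : V} (hv : v ∈ leafSet G) {e f : Sym2 V} (he : e ∈ G.edgeSet)
    (hf : f ∈ G.edgeSet) (hve : v ∈ e) (hvf : v ∈ f) : e = f := by
  obtain ⟨u, hu⟩ := hv
  rw [eq_mk_of_neighborSet_eq_singleton hu he hve,
    eq_mk_of_neighborSet_eq_singleton hu hf hvf]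

lemma isIndepSet_middleGraph_range_inl : (middleGraph G).IsIndepSet (Set.range Sum.inl) := by
  rintro _ ⟨v, rfl⟩ _ ⟨w, rfl⟩ _
  exact id

lemma IsTotalDomSet.inr_mem_middleGraph {D : Set (V ⊕ G.edgeSet)}
    (hD : IsTotalDomSet (middleGraph G) D) {e : G.edgeSet} {v : V} (hv : v ∈ leafSet G)
    (hve : v ∈ (e : Sym2 V)) : Sum.inr e ∈ D := by
  obtain ⟨x | f, hxD, hadj⟩ := hD (Sum.inl v)
  · exact absurd hadj id
  · have : f = e := Subtype.ext (edge_eq_of_mem_leafSet hv f.2 e.2 hadj hve)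
    rwa [← this]

lemma isTOCDomSet_middleGraph_compl_singleton (hadj : ∀ w, ∃ u, G.Adj w u) (v : V) :
    IsTOCDomSet (middleGraph G) {Sum.inl v}ᶜ := by
  refine ⟨?_, ?_⟩
  · rintro (w | ⟨e, he⟩)
    · obtain ⟨u, hwu⟩ := hadj w
      exact ⟨Sum.inr ⟨s(w, u), hwu⟩, by simp, Sym2.mem_mk_left w u⟩
    · induction e using Sym2.ind with
      | h a b =>
        by_cases hav : a = v
        · refine ⟨Sum.inl b, ?_, Sym2.mem_mk_right a b⟩
          simpa [← hav] using (G.ne_of_adj he).symm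
        · exact ⟨Sum.inl a, by simpa using hav, Sym2.mem_mk_left a b⟩
  · rw [compl_compl]
    exact Connected.of_subsingleton

variable [Finite V]

lemma IsTOCDomSet.card_sub_one_le_ncard_middleGraph
    (hleaf : ∀ e ∈ G.edgeSet, ∃ v ∈ e, v ∈ leafSet G)
    {D : Set (V ⊕ G.edgeSet)} (hD : IsTOCDomSet (middleGraph G) D) :
    Nat.card V + Nat.card G.edgeSet - 1 ≤ D.ncard := by
  have hcompl : Dᶜ ⊆ Set.range Sum.inl := by
    rintro (v | ⟨e, he⟩) hx
    · exact ⟨v, rfl⟩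
    · obtain ⟨v, hve, hv⟩ := hleaf e he
      exact absurd (hD.1.inr_mem_middleGraph hv hve) hx
  have hindep : (middleGraph G).IsIndepSet Dᶜ := isIndepSet_middleGraph_range_inl.mono hcompl
  have hsub : Dᶜ.ncard ≤ 1 :=
    Set.ncard_le_one_iff_subsingleton.2 (hindep.subsingleton_of_connected_induce hD.2)
  have hsum := Set.ncard_add_ncard_compl D
  rw [Nat.card_sum] at hsum
  omega

theorem tocDomNum_middleGraph [Nonempty V] (hadj : ∀ w, ∃ u, G.Adj w u)
    (hleaf : ∀ e ∈ G.edgeSet, ∃ v ∈ e, v ∈ leafSet G) :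
    tocDomNum (middleGraph G) = Nat.card V + Nat.card G.edgeSet - 1 := by
  obtain ⟨v⟩ := ‹Nonempty V›
  have hcard : ({Sum.inl v}ᶜ : Set (V ⊕ G.edgeSet)).ncard =
      Nat.card V + Nat.card G.edgeSet - 1 := by
    rw [Set.ncard_compl, Set.ncard_singleton, Nat.card_sum]
  have hmem := isTOCDomSet_middleGraph_compl_singleton hadj v
  refine le_antisymm (Nat.sInf_le ⟨_, hmem, hcard⟩) (le_csInf ⟨_, _, hmem, hcard⟩ ?_)
  rintro k ⟨D, hD, rfl⟩
  exact hD.card_sub_one_le_ncard_middleGraph hleaf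

end SimpleGraph

section Star

variable {W : Type*}

lemma completeBipartiteGraph_inr_mem_leafSet (w : W) :
    Sum.inr w ∈ leafSet (completeBipartiteGraph (Fin 1) W) := by
  refine ⟨Sum.inl 0, Set.ext ?_⟩
  rintro (a | b) <;> simp [Fin.fin_one_eq_zero]

lemma completeBipartiteGraph_exists_mem_leafSet {e : Sym2 (Fin 1 ⊕ W)}
    (he : e ∈ (completeBipartiteGraph (Fin 1) W).edgeSet) :
    ∃ v ∈ e, v ∈ leafSet (completeBipartiteGraph (Fin 1) W) := by
  rw [edgeSet_completeBipartiteGraph] at he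
  obtain ⟨⟨_, w⟩, rfl⟩ := he
  exact ⟨Sum.inr w, Sym2.mem_mk_right _ _, completeBipartiteGraph_inr_mem_leafSet w⟩

lemma card_edgeSet_completeBipartiteGraph_fin_one :
    Nat.card (completeBipartiteGraph (Fin 1) W).edgeSet = Nat.card W := by
  rw [edgeSet_completeBipartiteGraph, Nat.card_range_of_injective, Nat.card_prod, Nat.card_unique,
    one_mul]
  rintro ⟨a, w⟩ ⟨b, w'⟩ h
  simpa [Fin.fin_one_eq_zero] using h

lemma completeBipartiteGraph_exists_adj [Nonempty W] (v : Fin 1 ⊕ W) :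
    ∃ u, (completeBipartiteGraph (Fin 1) W).Adj v u := by
  obtain ⟨w⟩ := ‹Nonempty W›
  rcases v with a | b
  · exact ⟨Sum.inr w, by simp⟩
  · exact ⟨Sum.inl 0, by simp⟩

end Star

theorem stmt6 (n : ℕ) (hn : 3 ≤ n) :
    tocDomNum (middleGraph (completeBipartiteGraph (Fin 1) (Fin (n - 1)))) = 2 * n - 2 := by
  have : Nonempty (Fin (n - 1)) := ⟨⟨0, by omega⟩⟩
  rw [tocDomNum_middleGraph completeBipartiteGraph_exists_adj
    fun _ => completeBipartiteGraph_exists_mem_leafSet, card_edgeSet_completeBipartiteGraph_fin_one]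
  simp only [Nat.card_eq_fintype_card, Fintype.card_sum, Fintype.card_fin]
  omega
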